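/- arXiv:1008.2112 — 2 statements merged into one kernel-verified Lean document; each statement's English description precedes it below -/
import Mathlib

section
/- Weak bisimilarity ≈ is an equivalence relation on resumptions: it is reflexive (r ≈ r for all r), symmetric (r ≈ r* implies r* ≈ r), and transitive (r₀ ≈ r₁ and r₁ ≈ r₂ imply r₀ ≈ r₂). -/
/-! Core definitions: delayful resumptions as an M-type, strong bisimilarity,
convergence, divergence, responsiveness, committedness, weak bisimilarities. -/

abbrev state := String → ℤ

/-- Shapes of the polynomial functor for delayful resumptions. -/
inductive RShape where
  | ret (σ : state)
  | inp
  | out (v : ℤ)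
  | delay

/-- The polynomial functor X ↦ state ⊕ (ℤ → X) ⊕ (ℤ × X) ⊕ X. -/
def ResPF : PFunctor :=
  ⟨RShape, fun s => match s with
    | .ret _ => PEmpty
    | .inp => ℤ
    | .out _ => PUnit
    | .delay => PUnit⟩

/-- Delayful resumptions: the final coalgebra (M-type) of `ResPF`. -/
def Res : Type := ResPF.M

namespace Res

def ret (σ : state) : Res := PFunctor.M.mk ⟨RShape.ret σ, PEmpty.elim⟩

def inp (f : ℤ → Res) : Res := PFunctor.M.mk ⟨RShape.inp, f⟩

def out (v : ℤ) (r : Res) : Res := PFunctor.M.mk ⟨RShape.out v, fun _ => r⟩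

def delay (r : Res) : Res := PFunctor.M.mk ⟨RShape.delay, fun _ => r⟩

/-- The silently diverging resumption ⊥, satisfying ⊥ = δ ⊥. -/
def bot : Res := PFunctor.M.corec (fun _ : Unit => ⟨RShape.delay, fun _ => ()⟩) ()

end Res

/-- One step of strong bisimilarity. -/
def BisimF (R : Res → Res → Prop) (r r₁ : Res) : Prop :=
  (∃ σ, r = Res.ret σ ∧ r₁ = Res.ret σ) ∨
  (∃ f f₁, r = Res.inp f ∧ r₁ = Res.inp f₁ ∧ ∀ v, R (f v) (f₁ v)) ∨
  (∃ v a a₁, r = Res.out v a ∧ r₁ = Res.out v a₁ ∧ R a a₁) ∨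
  (∃ a a₁, r = Res.delay a ∧ r₁ = Res.delay a₁ ∧ R a a₁)

/-- Strong bisimilarity ≅: the greatest relation closed under `BisimF`. -/
def Bisim (r r₁ : Res) : Prop :=
  ∃ R : Res → Res → Prop, (∀ x y, R x y → BisimF R x y) ∧ R r r₁

/-- Convergence r ⇓ r': r converges in finitely many delay steps to a
resumption that has terminated or performs an observable action. -/
inductive Conv : Res → Res → Prop where
  | ret (σ : state) : Conv (Res.ret σ) (Res.ret σ)
  | inp {f f₁ : ℤ → Res} : (∀ v, Bisim (f v) (f₁ v)) → Conv (Res.inp f) (Res.inp f₁)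
  | out {v : ℤ} {r r₁ : Res} : Bisim r r₁ → Conv (Res.out v r) (Res.out v r₁)
  | delay {r r' : Res} : Conv r r' → Conv (Res.delay r) r'

/-- Divergence r ⇑: r silently diverges (greatest predicate with δ r ⇑ whenever r ⇑). -/
def Diverge (r : Res) : Prop :=
  ∃ P : Res → Prop, (∀ x, P x → ∃ x', x = Res.delay x' ∧ P x') ∧ P r

/-- One step of responsiveness. -/
def RespF (P : Res → Prop) (r : Res) : Prop :=
  (∃ σ, Conv r (Res.ret σ)) ∨
  (∃ f, Conv r (Res.inp f) ∧ ∀ v, P (f v)) ∨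
  (∃ v r', Conv r (Res.out v r') ∧ P r')

/-- Responsiveness ↓↓ r: the greatest predicate closed under `RespF`. -/
def Resp (r : Res) : Prop :=
  ∃ P : Res → Prop, (∀ x, P x → RespF P x) ∧ P r

/-- One step of committedness: responsiveness with a divergence option. -/
def CommF (P : Res → Prop) (r : Res) : Prop :=
  (∃ σ, Conv r (Res.ret σ)) ∨
  (∃ f, Conv r (Res.inp f) ∧ ∀ v, P (f v)) ∨
  (∃ v r', Conv r (Res.out v r') ∧ P r') ∨
  Diverge r

/-- Committedness ⇕ r: the greatest predicate closed under `CommF`. -/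
def Comm (r : Res) : Prop :=
  ∃ P : Res → Prop, (∀ x, P x → CommF P x) ∧ P r

/-- One step of (termination-sensitive) weak bisimilarity. -/
def WBisimF (R : Res → Res → Prop) (r r₁ : Res) : Prop :=
  (∃ σ, Conv r (Res.ret σ) ∧ Conv r₁ (Res.ret σ)) ∨
  (∃ f f₁, Conv r (Res.inp f) ∧ Conv r₁ (Res.inp f₁) ∧ ∀ v, R (f v) (f₁ v)) ∨
  (∃ v a a₁, Conv r (Res.out v a) ∧ Conv r₁ (Res.out v a₁) ∧ R a a₁) ∨
  (∃ a a₁, r = Res.delay a ∧ r₁ = Res.delay a₁ ∧ R a a₁)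

/-- Weak bisimilarity ≈: the greatest relation closed under `WBisimF`. -/
def WBisim (r r₁ : Res) : Prop :=
  ∃ R : Res → Res → Prop, (∀ x y, R x y → WBisimF R x y) ∧ R r r₁

/-- The inductive part ≈↓(X) of the second formulation of weak bisimilarity. -/
inductive WBisimI (X : Res → Res → Prop) : Res → Res → Prop where
  | ret (σ : state) : WBisimI X (Res.ret σ) (Res.ret σ)
  | out {v r r₁} : X r r₁ → WBisimI X (Res.out v r) (Res.out v r₁)
  | inp {f f₁} : (∀ v, X (f v) (f₁ v)) → WBisimI X (Res.inp f) (Res.inp f₁)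
  | delayL {r r₁} : WBisimI X r r₁ → WBisimI X (Res.delay r) r₁
  | delayR {r r₁} : WBisimI X r r₁ → WBisimI X r (Res.delay r₁)

/-- One step of the second (Mendler-style) formulation ≈° of weak bisimilarity. -/
def WBisimOF (R : Res → Res → Prop) (r r₁ : Res) : Prop :=
  (∃ X : Res → Res → Prop, (∀ x y, X x y → R x y) ∧ WBisimI X r r₁) ∨
  (∃ a a₁, r = Res.delay a ∧ r₁ = Res.delay a₁ ∧ R a a₁)

/-- The second formulation ≈° of weak bisimilarity (induction nested into coinduction). -/
def WBisimO (r r₁ : Res) : Prop :=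
  ∃ R : Res → Res → Prop, (∀ x y, R x y → WBisimOF R x y) ∧ R r r₁

/-- One step of classical-style weak bisimilarity. -/
def WBisimClF (R : Res → Res → Prop) (r r₁ : Res) : Prop :=
  (∃ σ, Conv r (Res.ret σ) ∧ Conv r₁ (Res.ret σ)) ∨
  (∃ v a a₁, Conv r (Res.out v a) ∧ Conv r₁ (Res.out v a₁) ∧ R a a₁) ∨
  (∃ f f₁, Conv r (Res.inp f) ∧ Conv r₁ (Res.inp f₁) ∧ ∀ v, R (f v) (f₁ v)) ∨
  (Diverge r ∧ Diverge r₁)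

/-- Classical-style weak bisimilarity ≈c. -/
def WBisimCl (r r₁ : Res) : Prop :=
  ∃ R : Res → Res → Prop, (∀ x y, R x y → WBisimClF R x y) ∧ R r r₁

/-!
Strong bisimilarity on the final coalgebra `Res` is equality, so the observable head `d` with
`r ⇓ d` is unique. The key step is to transport convergence along weak bisimilarity: if `x ≈ y`
and `x ⇓ d`, then `y ⇓ e` for a head `e` performing the same action as `d`, with weakly bisimilar
continuations; this goes by induction on `x ⇓ d`, the only new case being a common delay step.
Transitivity then follows by coinduction on the composite relation `≈ ∘ ≈`, where two leading
delays are either matched with each other or, when only `y ≈ z` converges, the convergence of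
`y` is transported back to `x`.
-/

namespace Res

theorem mk_eq_mk {x y : ResPF.Obj Res} : (PFunctor.M.mk x : Res) = PFunctor.M.mk y ↔ x = y :=
  ⟨PFunctor.M.mk_inj, congrArg _⟩

@[simp] theorem ret_inj {σ τ : state} : ret σ = ret τ ↔ σ = τ := by
  refine ⟨fun h => ?_, congrArg ret⟩
  cases mk_eq_mk.1 h
  rfl

@[simp] theorem inp_inj {f g : ℤ → Res} : inp f = inp g ↔ f = g := by
  refine ⟨fun h => ?_, congrArg inp⟩
  cases mk_eq_mk.1 h
  rfl

@[simp] theorem out_inj {v w : ℤ} {a b : Res} : out v a = out w b ↔ v = w ∧ a = b := by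
  refine ⟨fun h => ?_, fun ⟨hv, ha⟩ => hv ▸ ha ▸ rfl⟩
  obtain ⟨hv, ha⟩ := Sigma.mk.inj_iff.1 (mk_eq_mk.1 h)
  cases hv
  exact ⟨rfl, congrFun (eq_of_heq ha) PUnit.unit⟩

@[simp] theorem delay_inj {a b : Res} : delay a = delay b ↔ a = b := by
  refine ⟨fun h => ?_, congrArg delay⟩
  exact congrFun (eq_of_heq (Sigma.mk.inj_iff.1 (mk_eq_mk.1 h)).2) PUnit.unit

@[simp] theorem ret_ne_inp {σ f} : ret σ ≠ inp f := fun h => by cases mk_eq_mk.1 h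
@[simp] theorem ret_ne_out {σ v a} : ret σ ≠ out v a := fun h => by cases mk_eq_mk.1 h
@[simp] theorem ret_ne_delay {σ a} : ret σ ≠ delay a := fun h => by cases mk_eq_mk.1 h
@[simp] theorem inp_ne_out {f v a} : inp f ≠ out v a := fun h => by cases mk_eq_mk.1 h
@[simp] theorem inp_ne_delay {f a} : inp f ≠ delay a := fun h => by cases mk_eq_mk.1 h
@[simp] theorem out_ne_delay {v a b} : out v a ≠ delay b := fun h => by cases mk_eq_mk.1 h

theorem exists_eq_ret_or_inp_or_out_or_delay (r : Res) :
    (∃ σ, r = ret σ) ∨ (∃ f, r = inp f) ∨ (∃ v a, r = out v a) ∨ ∃ a, r = delay a := by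
  rw [← PFunctor.M.mk_dest r]
  rcases PFunctor.M.dest r with ⟨σ | _ | v | _, c⟩
  · exact Or.inl ⟨σ, congrArg _ (congrArg _ (funext fun i => i.elim))⟩
  · exact Or.inr (Or.inl ⟨c, rfl⟩)
  · exact Or.inr (Or.inr (Or.inl ⟨v, c PUnit.unit, rfl⟩))
  · exact Or.inr (Or.inr (Or.inr ⟨c PUnit.unit, rfl⟩))

end Res

open Res

theorem Bisim.eq {r r₁ : Res} (h : Bisim r r₁) : r = r₁ := by
  obtain ⟨R, hR, hr⟩ := h
  refine PFunctor.M.bisim R (fun x y hxy => ?_) r r₁ hr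
  rcases hR x y hxy with ⟨σ, rfl, rfl⟩ | ⟨f, f₁, rfl, rfl, hf⟩ | ⟨v, a, a₁, rfl, rfl, ha⟩ |
    ⟨a, a₁, rfl, rfl, ha⟩
  · exact ⟨_, _, _, rfl, rfl, fun i => i.elim⟩
  · exact ⟨_, _, _, rfl, rfl, hf⟩
  · exact ⟨_, _, _, rfl, rfl, fun _ => ha⟩
  · exact ⟨_, _, _, rfl, rfl, fun _ => ha⟩

theorem Bisim.refl (r : Res) : Bisim r r := by
  refine ⟨Eq, fun x y hxy => ?_, rfl⟩
  subst hxy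
  rcases exists_eq_ret_or_inp_or_out_or_delay x with ⟨σ, rfl⟩ | ⟨f, rfl⟩ | ⟨v, a, rfl⟩ | ⟨a, rfl⟩
  · exact Or.inl ⟨σ, rfl, rfl⟩
  · exact Or.inr (Or.inl ⟨f, f, rfl, rfl, fun _ => rfl⟩)
  · exact Or.inr (Or.inr (Or.inl ⟨v, a, a, rfl, rfl, rfl⟩))
  · exact Or.inr (Or.inr (Or.inr ⟨a, a, rfl, rfl, rfl⟩))

namespace Conv

theorem inp_self (f : ℤ → Res) : Conv (Res.inp f) (Res.inp f) := .inp fun v => .refl (f v)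

theorem out_self (v : ℤ) (a : Res) : Conv (Res.out v a) (Res.out v a) := .out (.refl a)

theorem eq_of_ne_delay {x d : Res} (h : Conv x d) (hx : ∀ a, x ≠ Res.delay a) : d = x := by
  cases h with
  | ret σ => rfl
  | inp hf => exact congrArg Res.inp (funext fun v => (hf v).eq.symm)
  | out hb => exact congrArg _ hb.eq.symm
  | delay _ => exact absurd rfl (hx _)

theorem delay_inv {a d : Res} (h : Conv (Res.delay a) d) : Conv a d := by
  generalize hx : Res.delay a = x at h
  cases h with
  | ret σ => exact absurd hx.symm ret_ne_delay
  | inp _ => exact absurd hx.symm inp_ne_delay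
  | out _ => exact absurd hx.symm out_ne_delay
  | delay hc => exact delay_inj.1 hx ▸ hc

theorem unique {x d e : Res} (hd : Conv x d) (he : Conv x e) : d = e := by
  induction hd generalizing e with
  | delay _ ih => exact ih he.delay_inv
  | ret σ => exact (he.eq_of_ne_delay (by simp)).symm
  | inp hf =>
    exact ((Conv.inp hf).eq_of_ne_delay (by simp)).trans (he.eq_of_ne_delay (by simp)).symm
  | out hb =>
    exact ((Conv.out hb).eq_of_ne_delay (by simp)).trans (he.eq_of_ne_delay (by simp)).symm

end Conv

def HeadRel (R : Res → Res → Prop) (d e : Res) : Prop :=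
  (∃ σ, d = ret σ ∧ e = ret σ) ∨
  (∃ f f₁, d = inp f ∧ e = inp f₁ ∧ ∀ v, R (f v) (f₁ v)) ∨
  (∃ v a a₁, d = out v a ∧ e = out v a₁ ∧ R a a₁)

namespace HeadRel

variable {R S : Res → Res → Prop} {d e c : Res}

theorem mono (hRS : ∀ x y, R x y → S x y) (h : HeadRel R d e) : HeadRel S d e := by
  rcases h with h | ⟨f, f₁, hd, he, hf⟩ | ⟨v, a, a₁, hd, he, ha⟩
  · exact Or.inl h
  · exact Or.inr (Or.inl ⟨f, f₁, hd, he, fun v => hRS _ _ (hf v)⟩)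
  · exact Or.inr (Or.inr ⟨v, a, a₁, hd, he, hRS _ _ ha⟩)

theorem flip (h : HeadRel R d e) : HeadRel (flip R) e d := by
  rcases h with ⟨σ, hd, he⟩ | ⟨f, f₁, hd, he, hf⟩ | ⟨v, a, a₁, hd, he, ha⟩
  · exact Or.inl ⟨σ, he, hd⟩
  · exact Or.inr (Or.inl ⟨f₁, f, he, hd, hf⟩)
  · exact Or.inr (Or.inr ⟨v, a₁, a, he, hd, ha⟩)

theorem comp (h : HeadRel R d e) (h' : HeadRel S e c) : HeadRel (Relation.Comp R S) d c := by
  rcases h with ⟨σ, rfl, rfl⟩ | ⟨f, f₁, rfl, rfl, hf⟩ | ⟨v, a, a₁, rfl, rfl, ha⟩ <;>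
    rcases h' with ⟨τ, he, rfl⟩ | ⟨g, g₁, he, rfl, hg⟩ | ⟨w, b, b₁, he, rfl, hb⟩ <;>
    simp only [ret_inj, inp_inj, out_inj, ret_ne_inp, ret_ne_out, inp_ne_out,
      ret_ne_inp.symm, ret_ne_out.symm, inp_ne_out.symm] at he
  · exact Or.inl ⟨σ, rfl, he ▸ rfl⟩
  · subst he
    exact Or.inr (Or.inl ⟨f, g₁, rfl, rfl, fun v => ⟨f₁ v, hf v, hg v⟩⟩)
  · obtain ⟨rfl, rfl⟩ := he
    exact Or.inr (Or.inr ⟨v, a, b₁, rfl, rfl, a₁, ha, hb⟩)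

end HeadRel

theorem wbisimF_iff {R : Res → Res → Prop} {r r₁ : Res} :
    WBisimF R r r₁ ↔ (∃ d e, Conv r d ∧ Conv r₁ e ∧ HeadRel R d e) ∨
      ∃ a a₁, r = delay a ∧ r₁ = delay a₁ ∧ R a a₁ := by
  constructor
  · rintro (⟨σ, hr, hr₁⟩ | ⟨f, f₁, hr, hr₁, hf⟩ | ⟨v, a, a₁, hr, hr₁, ha⟩ | h)
    · exact Or.inl ⟨_, _, hr, hr₁, Or.inl ⟨σ, rfl, rfl⟩⟩
    · exact Or.inl ⟨_, _, hr, hr₁, Or.inr (Or.inl ⟨f, f₁, rfl, rfl, hf⟩)⟩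
    · exact Or.inl ⟨_, _, hr, hr₁, Or.inr (Or.inr ⟨v, a, a₁, rfl, rfl, ha⟩)⟩
    · exact Or.inr h
  · rintro (⟨d, e, hr, hr₁, ⟨σ, rfl, rfl⟩ | ⟨f, f₁, rfl, rfl, hf⟩ | ⟨v, a, a₁, rfl, rfl, ha⟩⟩ | h)
    · exact Or.inl ⟨σ, hr, hr₁⟩
    · exact Or.inr (Or.inl ⟨f, f₁, hr, hr₁, hf⟩)
    · exact Or.inr (Or.inr (Or.inl ⟨v, a, a₁, hr, hr₁, ha⟩))
    · exact Or.inr (Or.inr (Or.inr h))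

namespace WBisim

variable {r r₀ r₁ r₂ d : Res}

theorem unfold (h : WBisim r r₁) : WBisimF WBisim r r₁ := by
  obtain ⟨R, hR, hr⟩ := h
  have hRW : ∀ x y, R x y → WBisim x y := fun x y hxy => ⟨R, hR, hxy⟩
  rcases wbisimF_iff.1 (hR r r₁ hr) with ⟨d, e, hd, he, hde⟩ | ⟨a, a₁, ha, ha₁, haa⟩
  · exact wbisimF_iff.2 (Or.inl ⟨d, e, hd, he, hde.mono hRW⟩)
  · exact wbisimF_iff.2 (Or.inr ⟨a, a₁, ha, ha₁, hRW _ _ haa⟩)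

theorem refl (r : Res) : WBisim r r := by
  refine ⟨Eq, fun x y hxy => ?_, rfl⟩
  subst hxy
  rcases exists_eq_ret_or_inp_or_out_or_delay x with ⟨σ, rfl⟩ | ⟨f, rfl⟩ | ⟨v, a, rfl⟩ | ⟨a, rfl⟩
  · exact Or.inl ⟨σ, .ret σ, .ret σ⟩
  · exact Or.inr (Or.inl ⟨f, f, .inp_self f, .inp_self f, fun _ => rfl⟩)
  · exact Or.inr (Or.inr (Or.inl ⟨v, a, a, .out_self v a, .out_self v a, rfl⟩))
  · exact Or.inr (Or.inr (Or.inr ⟨a, a, rfl, rfl, rfl⟩))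

theorem symm (h : WBisim r r₁) : WBisim r₁ r := by
  refine ⟨flip WBisim, fun x y hxy => ?_, h⟩
  rcases wbisimF_iff.1 (unfold hxy) with ⟨d, e, hd, he, hde⟩ | ⟨a, a₁, ha, ha₁, haa⟩
  · exact wbisimF_iff.2 (Or.inl ⟨e, d, he, hd, hde.flip⟩)
  · exact wbisimF_iff.2 (Or.inr ⟨a₁, a, ha₁, ha, haa⟩)

theorem exists_conv_or_delay (hw : WBisim r r₁) (h : Conv r d) :
    (∃ e, Conv r₁ e ∧ HeadRel WBisim d e) ∨
      ∃ a a₁, r = delay a ∧ r₁ = delay a₁ ∧ WBisim a a₁ := by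
  rcases wbisimF_iff.1 hw.unfold with ⟨d', e, hd', he, hde⟩ | h'
  · exact Or.inl ⟨e, he, hd'.unique h ▸ hde⟩
  · exact Or.inr h'

theorem exists_conv (hw : WBisim r r₁) (h : Conv r d) : ∃ e, Conv r₁ e ∧ HeadRel WBisim d e := by
  induction h generalizing r₁ with
  | delay hc ih =>
    rcases hw.exists_conv_or_delay hc.delay with h' | ⟨a, a₁, ha, rfl, haa⟩
    · exact h'
    · obtain ⟨e, he, hde⟩ := ih (delay_inj.1 ha ▸ haa)
      exact ⟨e, he.delay, hde⟩
  | ret σ => simpa using hw.exists_conv_or_delay (.ret σ)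
  | inp hf => simpa using hw.exists_conv_or_delay (.inp hf)
  | out hb => simpa using hw.exists_conv_or_delay (.out hb)

theorem trans (h : WBisim r₀ r₁) (h' : WBisim r₁ r₂) : WBisim r₀ r₂ := by
  refine ⟨Relation.Comp WBisim WBisim, fun x z ⟨y, hxy, hyz⟩ => ?_, r₁, h, h'⟩
  rcases wbisimF_iff.1 hxy.unfold with ⟨d, e, hd, he, hde⟩ | ⟨a, b, rfl, rfl, hab⟩
  · obtain ⟨c, hc, hec⟩ := hyz.exists_conv he
    exact wbisimF_iff.2 (Or.inl ⟨d, c, hd, hc, hde.comp hec⟩)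
  rcases wbisimF_iff.1 hyz.unfold with ⟨e, c, he, hc, hec⟩ | ⟨b', c, hb, rfl, hbc⟩
  · obtain ⟨d, hd, hed⟩ := hab.symm.exists_conv he.delay_inv
    exact wbisimF_iff.2 (Or.inl ⟨d, c, hd.delay, hc, (hed.flip.mono fun _ _ => symm).comp hec⟩)
  · exact wbisimF_iff.2 (Or.inr ⟨a, c, rfl, rfl, b, hab, delay_inj.1 hb ▸ hbc⟩)

end WBisim

/-- Weak bisimilarity is an equivalence relation. -/
theorem wbisim_equivalence : Equivalence WBisim :=
  ⟨WBisim.refl, WBisim.symm, WBisim.trans⟩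
end

section
/- Classical-style weak bisimilarity implies weak bisimilarity, and conversely (classically): for any resumptions r and r*, r ≈c r* if and only if r ≈ r*. (The forward direction is constructive; the converse uses classical logic, ambient in Lean.) -/
/-! Any two divergent resumptions are `≈c`-related, so the divergence clause of `≈c` is replayed
by the delay clause of `≈`, and `≈c` is a weak bisimulation. Conversely, by excluded middle either
`r` converges, and induction on the convergence turns `r ≈ r₁` into one of the first three clauses
of `≈c`, or it does not, and then `≈` can relate `r` and `r₁` only through delay steps, forever. -/

namespace Res

theorem shape_eq_of_mk_eq {s s' : RShape} {f : ResPF.B s → Res} {f' : ResPF.B s' → Res}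
    (h : (PFunctor.M.mk ⟨s, f⟩ : Res) = PFunctor.M.mk ⟨s', f'⟩) : s = s' :=
  congrArg Sigma.fst (PFunctor.M.mk_inj h)

theorem delay_injective : Function.Injective Res.delay := fun a b h => by
  have hmk := PFunctor.M.mk_inj h
  injection hmk with _ hchild
  exact congrFun hchild PUnit.unit

theorem ret_ne_delay_s7 {σ : state} {a : Res} : Res.ret σ ≠ Res.delay a :=
  fun h => by cases shape_eq_of_mk_eq h

theorem inp_ne_delay_s7 {f : ℤ → Res} {a : Res} : Res.inp f ≠ Res.delay a :=
  fun h => by cases shape_eq_of_mk_eq h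

theorem out_ne_delay_s7 {v : ℤ} {r a : Res} : Res.out v r ≠ Res.delay a :=
  fun h => by cases shape_eq_of_mk_eq h

end Res

namespace Diverge

theorem exists_eq_delay {r : Res} (h : Diverge r) : ∃ a, r = Res.delay a ∧ Diverge a := by
  obtain ⟨P, hP, hr⟩ := h
  obtain ⟨a, rfl, ha⟩ := hP r hr
  exact ⟨a, rfl, P, hP, ha⟩

theorem delay {a : Res} (h : Diverge a) : Diverge (Res.delay a) := by
  refine ⟨fun x => x = Res.delay a ∨ Diverge x, ?_, Or.inl rfl⟩
  rintro x (rfl | hx)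
  · exact ⟨a, rfl, Or.inr h⟩
  · obtain ⟨b, rfl, hb⟩ := hx.exists_eq_delay
    exact ⟨b, rfl, Or.inr hb⟩

end Diverge

section Steps

variable {R S : Res → Res → Prop} {r r₁ : Res}

theorem WBisimF.mono (hRS : ∀ x y, R x y → S x y) : WBisimF R r r₁ → WBisimF S r r₁
  | .inl h => .inl h
  | .inr (.inl ⟨f, f₁, hc, hc₁, hR⟩) => .inr (.inl ⟨f, f₁, hc, hc₁, fun v => hRS _ _ (hR v)⟩)
  | .inr (.inr (.inl ⟨v, a, a₁, hc, hc₁, hR⟩)) => .inr (.inr (.inl ⟨v, a, a₁, hc, hc₁, hRS _ _ hR⟩))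
  | .inr (.inr (.inr ⟨a, a₁, ha, ha₁, hR⟩)) => .inr (.inr (.inr ⟨a, a₁, ha, ha₁, hRS _ _ hR⟩))

theorem WBisimClF.mono (hRS : ∀ x y, R x y → S x y) : WBisimClF R r r₁ → WBisimClF S r r₁
  | .inl h => .inl h
  | .inr (.inl ⟨v, a, a₁, hc, hc₁, hR⟩) => .inr (.inl ⟨v, a, a₁, hc, hc₁, hRS _ _ hR⟩)
  | .inr (.inr (.inl ⟨f, f₁, hc, hc₁, hR⟩)) =>
    .inr (.inr (.inl ⟨f, f₁, hc, hc₁, fun v => hRS _ _ (hR v)⟩))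
  | .inr (.inr (.inr h)) => .inr (.inr (.inr h))

theorem WBisimClF.delay {a a₁ : Res} :
    WBisimClF R a a₁ → WBisimClF R (Res.delay a) (Res.delay a₁)
  | .inl ⟨σ, hc, hc₁⟩ => .inl ⟨σ, hc.delay, hc₁.delay⟩
  | .inr (.inl ⟨v, b, b₁, hc, hc₁, hR⟩) => .inr (.inl ⟨v, b, b₁, hc.delay, hc₁.delay, hR⟩)
  | .inr (.inr (.inl ⟨f, f₁, hc, hc₁, hR⟩)) => .inr (.inr (.inl ⟨f, f₁, hc.delay, hc₁.delay, hR⟩))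
  | .inr (.inr (.inr ⟨hd, hd₁⟩)) => .inr (.inr (.inr ⟨hd.delay, hd₁.delay⟩))

theorem WBisimF.wbisimClF_of_delay (h : WBisimF R r r₁)
    (hδ : ∀ a a₁, r = Res.delay a → r₁ = Res.delay a₁ → R a a₁ → WBisimClF R r r₁) :
    WBisimClF R r r₁ := by
  rcases h with h | ⟨f, f₁, hc, hc₁, hR⟩ | h | ⟨a, a₁, ha, ha₁, hR⟩
  · exact .inl h
  · exact .inr (.inr (.inl ⟨f, f₁, hc, hc₁, hR⟩))
  · exact .inr (.inl h)
  · exact hδ a a₁ ha ha₁ hR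

end Steps

theorem WBisim.unfold_s7 {r r₁ : Res} (h : WBisim r r₁) : WBisimF WBisim r r₁ := by
  obtain ⟨R, hR, hr⟩ := h
  exact (hR _ _ hr).mono fun x y hxy => ⟨R, hR, hxy⟩

theorem WBisimCl.unfold_s7 {r r₁ : Res} (h : WBisimCl r r₁) : WBisimClF WBisimCl r r₁ := by
  obtain ⟨R, hR, hr⟩ := h
  exact (hR _ _ hr).mono fun x y hxy => ⟨R, hR, hxy⟩

theorem wbisimCl_of_diverge {r r₁ : Res} (hr : Diverge r) (hr₁ : Diverge r₁) : WBisimCl r r₁ :=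
  ⟨fun x y => Diverge x ∧ Diverge y, fun _ _ h => .inr (.inr (.inr h)), hr, hr₁⟩

theorem WBisimCl.wbisimF {r r₁ : Res} (h : WBisimCl r r₁) : WBisimF WBisimCl r r₁ := by
  rcases h.unfold_s7 with h | ⟨v, a, a₁, hc, hc₁, hR⟩ | h | ⟨hd, hd₁⟩
  · exact .inl h
  · exact .inr (.inr (.inl ⟨v, a, a₁, hc, hc₁, hR⟩))
  · exact .inr (.inl h)
  · obtain ⟨a, rfl, ha⟩ := hd.exists_eq_delay
    obtain ⟨a₁, rfl, ha₁⟩ := hd₁.exists_eq_delay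
    exact .inr (.inr (.inr ⟨a, a₁, rfl, rfl, wbisimCl_of_diverge ha ha₁⟩))

theorem WBisim.wbisimClF_of_conv {r x : Res} (hc : Conv r x) {r₁ : Res} (h : WBisim r r₁) :
    WBisimClF WBisim r r₁ := by
  induction hc generalizing r₁ with
  | ret => exact h.unfold_s7.wbisimClF_of_delay fun _ _ hr => absurd hr Res.ret_ne_delay_s7
  | inp => exact h.unfold_s7.wbisimClF_of_delay fun _ _ hr => absurd hr Res.inp_ne_delay_s7
  | out => exact h.unfold_s7.wbisimClF_of_delay fun _ _ hr => absurd hr Res.out_ne_delay_s7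
  | delay _ ih =>
    refine h.unfold_s7.wbisimClF_of_delay fun a a₁ hr hr₁ ha => ?_
    cases Res.delay_injective hr
    exact hr₁ ▸ (ih ha).delay

theorem WBisim.delay_of_not_conv {r r₁ : Res} (h : WBisim r r₁) (hr : ¬∃ x, Conv r x) :
    ∃ a a₁, r = Res.delay a ∧ r₁ = Res.delay a₁ ∧ WBisim a a₁ ∧ ¬∃ x, Conv a x := by
  rcases h.unfold_s7 with ⟨_, hc, _⟩ | ⟨_, _, hc, _⟩ | ⟨_, _, _, hc, _⟩ | ⟨a, a₁, rfl, rfl, ha⟩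
  iterate 3 exact absurd ⟨_, hc⟩ hr
  exact ⟨a, a₁, rfl, rfl, ha, fun ⟨x, hx⟩ => hr ⟨x, hx.delay⟩⟩

theorem WBisim.diverge_of_not_conv {r r₁ : Res} (h : WBisim r r₁) (hr : ¬∃ x, Conv r x) :
    Diverge r ∧ Diverge r₁ := by
  constructor
  · refine ⟨fun x => ∃ y, WBisim x y ∧ ¬∃ z, Conv x z, ?_, r₁, h, hr⟩
    rintro x ⟨y, hxy, hx⟩
    obtain ⟨a, a₁, rfl, -, ha, ha'⟩ := hxy.delay_of_not_conv hx
    exact ⟨a, rfl, a₁, ha, ha'⟩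
  · refine ⟨fun y => ∃ x, WBisim x y ∧ ¬∃ z, Conv x z, ?_, r, h, hr⟩
    rintro y ⟨x, hxy, hx⟩
    obtain ⟨a, a₁, -, rfl, ha, ha'⟩ := hxy.delay_of_not_conv hx
    exact ⟨a₁, rfl, a, ha, ha'⟩

theorem WBisim.wbisimClF {r r₁ : Res} (h : WBisim r r₁) : WBisimClF WBisim r r₁ := by
  by_cases hr : ∃ x, Conv r x
  · obtain ⟨x, hx⟩ := hr
    exact h.wbisimClF_of_conv hx
  · exact .inr (.inr (.inr (h.diverge_of_not_conv hr)))

/-- Classical-style weak bisimilarity coincides (classically) with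
constructive-style weak bisimilarity. -/
theorem wbisimCl_iff_wbisim : ∀ r r₁ : Res, WBisimCl r r₁ ↔ WBisim r r₁ := fun _ _ =>
  ⟨fun h => ⟨WBisimCl, fun _ _ => WBisimCl.wbisimF, h⟩,
    fun h => ⟨WBisim, fun _ _ => WBisim.wbisimClF, h⟩⟩
end
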